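/- arXiv:1611.03537 — 4 statements merged into one kernel-verified Lean document; each statement's English description precedes it below -/
import Mathlib

section
/- Let M be a set, F : M → M a map, φ = (φ_1,…,φ_N) : M → ℝ^N a vector of observables, and χ_1,…,χ_K ∈ M a finite collection of sample points. Suppose the matrix 𝒜 ∈ ℝ^{N×N} minimizes the least-squares objective A ↦ Σ_{i=1}^K ‖φ(F(χ_i)) − A φ(χ_i)‖₂² over all A ∈ ℝ^{N×N}. Then for every c ∈ ℝ^N and every d ∈ ℝ^N, Σ_{i=1}^K (cᵀ𝒜 φ(χ_i) − cᵀφ(F(χ_i)))² ≤ Σ_{i=1}^K (dᵀφ(χ_i) − cᵀφ(F(χ_i)))². In other words, for each observable g = cᵀφ in the span of φ_1,…,φ_N, the EDMD approximation x ↦ cᵀ𝒜φ(x) is the L²-projection, with respect to the empirical measure supported on the samples χ_1,…,χ_K, of the function Kg = g∘F onto the span of φ_1,…,φ_N. -/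
open Matrix

/-- If `a t² + b t ≥ 0` for all `t` with `a ≥ 0`, then `b = 0`. -/
lemma edmd_quad_coeff_zero (a b : ℝ) (ha : 0 ≤ a)
    (h : ∀ t : ℝ, 0 ≤ a * t ^ 2 + b * t) : b = 0 := by
  by_contra hb
  have ha1 : (0 : ℝ) < a + 1 := by linarith
  have h1 := h (-b / (a + 1))
  have h2 : 0 ≤ (a * (-b / (a + 1)) ^ 2 + b * (-b / (a + 1))) * (a + 1) ^ 2 :=
    mul_nonneg h1 (sq_nonneg _)
  have h3 : (a * (-b / (a + 1)) ^ 2 + b * (-b / (a + 1))) * (a + 1) ^ 2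
      = -(b ^ 2) := by
    field_simp
    ring
  rw [h3] at h2
  have hb2 : 0 < b ^ 2 := by positivity
  linarith

/-- Expansion of one row of the perturbed least-squares objective. -/
lemma edmd_row_expand {N : ℕ} (a b c : Fin N → ℝ) (t z : ℝ) :
    ∑ j : Fin N, (a j - (b j + t * c j * z)) ^ 2
      = (∑ j : Fin N, (a j - b j) ^ 2)
        + ((z ^ 2 * ∑ j : Fin N, (c j) ^ 2) * t ^ 2
          + (-2 * (z * ∑ j : Fin N, c j * (a j - b j))) * t) := by
  have hpt : ∀ j : Fin N, (a j - (b j + t * c j * z)) ^ 2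
      = (a j - b j) ^ 2 + ((z ^ 2 * (c j) ^ 2) * t ^ 2
        + (-2 * (z * (c j * (a j - b j)))) * t) := fun j => by ring
  rw [Finset.sum_congr rfl fun j _ => hpt j, Finset.sum_add_distrib,
    Finset.sum_add_distrib]
  congr 1
  congr 1
  · rw [Finset.mul_sum, Finset.sum_mul]
  · symm
    rw [Finset.mul_sum, Finset.mul_sum, Finset.sum_mul]

/-- **EDMD as L² projection (Theorem 1, sample version).**
If `𝒜` minimizes the EDMD least-squares objective
`A ↦ ∑ i, ‖φ(F(χ i)) − A φ(χ i)‖₂²`, then for every observable `g = cᵀφ`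
in the span of the basis functions, the function `x ↦ cᵀ𝒜φ(x)` is the
`L²(empirical measure)`-projection of `Kg = g ∘ F` onto the span of
`φ₁, …, φ_N`. -/
theorem edmd_is_L2_projection {M : Type*} (F : M → M) (N K : ℕ)
    (φ : M → Fin N → ℝ) (χ : Fin K → M) (𝒜 : Matrix (Fin N) (Fin N) ℝ)
    (hmin : ∀ A : Matrix (Fin N) (Fin N) ℝ,
      ∑ i : Fin K, ∑ j : Fin N, (φ (F (χ i)) j - 𝒜.mulVec (φ (χ i)) j) ^ 2 ≤
      ∑ i : Fin K, ∑ j : Fin N, (φ (F (χ i)) j - A.mulVec (φ (χ i)) j) ^ 2) :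
    ∀ c d : Fin N → ℝ,
      ∑ i : Fin K, (c ⬝ᵥ 𝒜.mulVec (φ (χ i)) - c ⬝ᵥ φ (F (χ i))) ^ 2 ≤
      ∑ i : Fin K, (d ⬝ᵥ φ (χ i) - c ⬝ᵥ φ (F (χ i))) ^ 2 := by
  intro c d
  -- orthogonality of residual against the span of the basis functions
  have key : ∀ r : Fin N → ℝ,
      ∑ i : Fin K, (r ⬝ᵥ φ (χ i)) *
        (c ⬝ᵥ φ (F (χ i)) - c ⬝ᵥ 𝒜.mulVec (φ (χ i))) = 0 := by
    intro r
    have hdot : ∀ i : Fin K,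
        c ⬝ᵥ φ (F (χ i)) - c ⬝ᵥ 𝒜.mulVec (φ (χ i))
          = ∑ j : Fin N, c j * (φ (F (χ i)) j - 𝒜.mulVec (φ (χ i)) j) := by
      intro i
      simp only [dotProduct, mul_sub, Finset.sum_sub_distrib]
    set S : ℝ := ∑ i : Fin K, (r ⬝ᵥ φ (χ i)) *
        (c ⬝ᵥ φ (F (χ i)) - c ⬝ᵥ 𝒜.mulVec (φ (χ i))) with hSdef
    set Q : ℝ := ∑ i : Fin K, (r ⬝ᵥ φ (χ i)) ^ 2 * (∑ j : Fin N, (c j) ^ 2)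
      with hQdef
    have hQ0 : 0 ≤ Q := Finset.sum_nonneg fun i _ =>
      mul_nonneg (sq_nonneg _) (Finset.sum_nonneg fun j _ => sq_nonneg _)
    have hquad : ∀ t : ℝ, 0 ≤ Q * t ^ 2 + (-2 * S) * t := by
      intro t
      have h2 : ∀ i j, (𝒜 + t • Matrix.vecMulVec c r).mulVec (φ (χ i)) j
          = 𝒜.mulVec (φ (χ i)) j + t * c j * (r ⬝ᵥ φ (χ i)) := by
        intro i j
        simp only [Matrix.add_mulVec, Matrix.smul_mulVec, Pi.add_apply,
          Pi.smul_apply, smul_eq_mul, Matrix.mulVec, dotProduct,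
          Matrix.vecMulVec_apply, Matrix.add_apply, Matrix.smul_apply,
          Finset.mul_sum]
        rw [← Finset.sum_add_distrib]
        exact Finset.sum_congr rfl fun x _ => by ring
      have h1 := hmin (𝒜 + t • Matrix.vecMulVec c r)
      have h3 : ∑ i : Fin K, ∑ j : Fin N,
          (φ (F (χ i)) j - (𝒜 + t • Matrix.vecMulVec c r).mulVec (φ (χ i)) j) ^ 2
          = (∑ i : Fin K, ∑ j : Fin N,
              (φ (F (χ i)) j - 𝒜.mulVec (φ (χ i)) j) ^ 2)
            + (Q * t ^ 2 + (-2 * S) * t) := by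
        have hrow : ∀ i : Fin K, ∑ j : Fin N,
            (φ (F (χ i)) j - (𝒜 + t • Matrix.vecMulVec c r).mulVec (φ (χ i)) j) ^ 2
            = (∑ j : Fin N, (φ (F (χ i)) j - 𝒜.mulVec (φ (χ i)) j) ^ 2)
              + (((r ⬝ᵥ φ (χ i)) ^ 2 * ∑ j : Fin N, (c j) ^ 2) * t ^ 2
                + (-2 * ((r ⬝ᵥ φ (χ i)) *
                    ∑ j : Fin N, c j * (φ (F (χ i)) j - 𝒜.mulVec (φ (χ i)) j))) * t) := by
          intro i
          rw [Finset.sum_congr rfl fun j _ => by rw [h2 i j]]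
          exact edmd_row_expand (φ (F (χ i))) (𝒜.mulVec (φ (χ i))) c t
            (r ⬝ᵥ φ (χ i))
        rw [Finset.sum_congr rfl fun i _ => hrow i, Finset.sum_add_distrib]
        congr 1
        rw [Finset.sum_add_distrib]
        congr 1
        · rw [hQdef, Finset.sum_mul]
        · rw [hSdef]
          symm
          rw [Finset.mul_sum, Finset.sum_mul]
          exact Finset.sum_congr rfl fun i _ => by rw [hdot i]
      rw [h3] at h1
      linarith
    have := edmd_quad_coeff_zero Q (-2 * S) hQ0 hquad
    linarith
  -- apply orthogonality with r = d - 𝒜ᵀ c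
  set r : Fin N → ℝ := fun j => d j - Matrix.vecMul c 𝒜 j with hrdef
  have hr : ∀ i : Fin K, r ⬝ᵥ φ (χ i)
      = d ⬝ᵥ φ (χ i) - c ⬝ᵥ 𝒜.mulVec (φ (χ i)) := by
    intro i
    rw [Matrix.dotProduct_mulVec]
    simp only [hrdef, dotProduct, sub_mul, Finset.sum_sub_distrib]
  have hkey := key r
  have hterm : ∀ i : Fin K, (d ⬝ᵥ φ (χ i) - c ⬝ᵥ φ (F (χ i))) ^ 2
      = (c ⬝ᵥ 𝒜.mulVec (φ (χ i)) - c ⬝ᵥ φ (F (χ i))) ^ 2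
        + ((r ⬝ᵥ φ (χ i)) ^ 2 + (-2) * ((r ⬝ᵥ φ (χ i)) *
            (c ⬝ᵥ φ (F (χ i)) - c ⬝ᵥ 𝒜.mulVec (φ (χ i))))) := by
    intro i
    have hd : d ⬝ᵥ φ (χ i) = c ⬝ᵥ 𝒜.mulVec (φ (χ i)) + r ⬝ᵥ φ (χ i) := by
      rw [hr i]; ring
    rw [hd]; ring
  have expand2 : ∑ i : Fin K, (d ⬝ᵥ φ (χ i) - c ⬝ᵥ φ (F (χ i))) ^ 2
      = (∑ i : Fin K, (c ⬝ᵥ 𝒜.mulVec (φ (χ i)) - c ⬝ᵥ φ (F (χ i))) ^ 2)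
        + ((∑ i : Fin K, (r ⬝ᵥ φ (χ i)) ^ 2)
          + (-2) * ∑ i : Fin K, (r ⬝ᵥ φ (χ i)) *
              (c ⬝ᵥ φ (F (χ i)) - c ⬝ᵥ 𝒜.mulVec (φ (χ i)))) := by
    rw [Finset.sum_congr rfl fun i _ => hterm i, Finset.sum_add_distrib]
    congr 1
    rw [Finset.sum_add_distrib]
    congr 1
    rw [Finset.mul_sum]
  have hsq : 0 ≤ ∑ i : Fin K, (r ⬝ᵥ φ (χ i)) ^ 2 :=
    Finset.sum_nonneg fun i _ => sq_nonneg _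
  rw [expand2, hkey]
  linarith
end

section
/- Let μ be a probability measure on a measurable space M, F : M → M measurable, and φ_1,…,φ_N : M → ℝ measurable functions such that each φ_i and each φ_i∘F is square-integrable with respect to μ. Assume μ-independence: μ({x ∈ M : cᵀφ(x) = 0}) = 0 for every nonzero c ∈ ℝ^N. Let (χ_k)_{k≥1} be a sequence of independent M-valued random variables each with distribution μ. Define, for each K, the empirical matrices G_K = (1/K) Σ_{i=1}^K φ(χ_i) φ(χ_i)ᵀ and V_K = (1/K) Σ_{i=1}^K φ(F(χ_i)) φ(χ_i)ᵀ, and the limit matrices G = ∫_M φ φᵀ dμ and V = ∫_M (φ∘F) φᵀ dμ. Then, with probability one, G_K is invertible for all sufficiently large K and the EDMD matrices 𝒜_{N,K} := V_K G_K^{-1} converge, as K → ∞, to the matrix 𝒜_N := V G^{-1}, i.e. ‖𝒜_{N,K} − 𝒜_N‖ → 0 almost surely in any matrix norm. -/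
/-!
Each entry of `G_K` and `V_K` is the empirical mean of an integrable function (a product of two
`L²` functions), so by the strong law of large numbers `G_K → G` and `V_K → V` almost surely.
`μ`-independence makes `G` nondegenerate: `cᵀ G c = ∫ (cᵀ φ)² dμ` vanishes only if `cᵀ φ = 0`
`μ`-a.e., which forces `c = 0`. Since the determinant and matrix inversion are continuous at an
invertible matrix, `G_K` is eventually invertible and `V_K G_K⁻¹ → V G⁻¹`.
-/

open MeasureTheory ProbabilityTheory Filter Topology Matrix

section StrongLaw

variable {Ω M : Type*} [MeasurableSpace Ω] [MeasurableSpace M] {P : Measure Ω}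
  {μ : Measure M} {χ : ℕ → Ω → M}

theorem tendsto_average_comp_ae {E : Type*} [NormedAddCommGroup E] [NormedSpace ℝ E]
    [CompleteSpace E] [SecondCountableTopology E] [MeasurableSpace E] [BorelSpace E]
    (hχ : ∀ k, Measurable (χ k)) (hindep : iIndepFun χ P) (hlaw : ∀ k, P.map (χ k) = μ)
    {g : M → E} (hg : Measurable g) (hint : Integrable g μ) :
    ∀ᵐ ω ∂P, Tendsto (fun K : ℕ => (K : ℝ)⁻¹ • ∑ i ∈ Finset.range K, g (χ i ω))
      atTop (𝓝 (∫ x, g x ∂μ)) := by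
  have hident : ∀ i, IdentDistrib (g ∘ χ i) (g ∘ χ 0) P P := fun i =>
    (IdentDistrib.mk (hχ i).aemeasurable (hχ 0).aemeasurable (by rw [hlaw, hlaw])).comp hg
  have hint₀ : Integrable (g ∘ χ 0) P :=
    (integrable_map_measure hg.aestronglyMeasurable (hχ 0).aemeasurable).mp (hlaw 0 ▸ hint)
  have hmean : ∫ ω, g (χ 0 ω) ∂P = ∫ x, g x ∂μ := by
    rw [← hlaw 0, integral_map (hχ 0).aemeasurable hg.aestronglyMeasurable]
  simpa only [Function.comp_apply, hmean] using
    strong_law_ae (fun i => g ∘ χ i) hint₀ (fun i j hij => (hindep.indepFun hij).comp hg hg)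
      hident

theorem tendsto_average_matrix_ae {ι κ : Type*} [Fintype ι] [Fintype κ]
    (hχ : ∀ k, Measurable (χ k)) (hindep : iIndepFun χ P) (hlaw : ∀ k, P.map (χ k) = μ)
    {ψ : ι → κ → M → ℝ} (hψ : ∀ j l, Measurable (ψ j l)) (hint : ∀ j l, Integrable (ψ j l) μ) :
    ∀ᵐ ω ∂P, Tendsto
      (fun K : ℕ => (K : ℝ)⁻¹ • ∑ i ∈ Finset.range K, Matrix.of fun j l => ψ j l (χ i ω))
      atTop (𝓝 (Matrix.of fun j l => ∫ x, ψ j l x ∂μ)) := by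
  have hint_row : ∀ j, Integrable (fun x l => ψ j l x) μ := fun j =>
    Integrable.of_eval (hint j)
  have hlim : ∫ x, (fun j l => ψ j l x) ∂μ = Matrix.of fun j l => ∫ x, ψ j l x ∂μ := by
    ext j l
    rw [eval_integral hint_row, eval_integral (hint j)]
    rfl
  -- `Matrix ι κ ℝ` is `ι → κ → ℝ`, a Banach space under the sup norm.
  have h := tendsto_average_comp_ae hχ hindep hlaw
    (measurable_pi_lambda _ fun j => measurable_pi_lambda _ (hψ j))
    (Integrable.of_eval hint_row)
  rw [hlim] at h
  exact h

end StrongLaw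

section Gram

variable {M ι : Type*} [MeasurableSpace M] {μ : Measure M} [Fintype ι] {φ : ι → M → ℝ}

theorem dotProduct_gram_mulVec (hφ : ∀ i, MemLp (φ i) 2 μ) (c : ι → ℝ) :
    c ⬝ᵥ ((Matrix.of fun j l => ∫ x, φ j x * φ l x ∂μ) *ᵥ c) =
      ∫ x, (∑ i, c i * φ i x) ^ 2 ∂μ := by
  have hint : ∀ j l, Integrable (fun x => φ j x * φ l x) μ := fun j l =>
    (hφ j).integrable_mul (hφ l)
  calc c ⬝ᵥ ((Matrix.of fun j l => ∫ x, φ j x * φ l x ∂μ) *ᵥ c)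
      = ∑ j, ∑ l, ∫ x, c j * c l * (φ j x * φ l x) ∂μ := by
        refine Finset.sum_congr rfl fun j _ => ?_
        simp only [mulVec, dotProduct, of_apply, Finset.mul_sum, integral_const_mul]
        exact Finset.sum_congr rfl fun l _ => by ring
    _ = ∫ x, ∑ j, ∑ l, c j * c l * (φ j x * φ l x) ∂μ := by
        rw [integral_finsetSum _ fun j _ =>
          integrable_finsetSum _ fun l _ => (hint j l).const_mul _]
        exact Finset.sum_congr rfl fun j _ =>
          (integral_finsetSum _ fun l _ => (hint j l).const_mul _).symm
    _ = ∫ x, (∑ i, c i * φ i x) ^ 2 ∂μ := by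
        refine integral_congr_ae (ae_of_all _ fun x => ?_)
        simp only [sq, Finset.sum_mul_sum]
        exact Finset.sum_congr rfl fun j _ => Finset.sum_congr rfl fun l _ => by ring

theorem det_gram_ne_zero [DecidableEq ι] [NeZero μ] (hφ : ∀ i, MemLp (φ i) 2 μ)
    (hindep : ∀ c : ι → ℝ, c ≠ 0 → μ {x | ∑ i, c i * φ i x = 0} = 0) :
    (Matrix.of fun j l => ∫ x, φ j x * φ l x ∂μ).det ≠ 0 := by
  intro hdet
  obtain ⟨c, hc, hGc⟩ := exists_mulVec_eq_zero_iff.mpr hdet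
  have hS : MemLp (fun x => ∑ i, c i * φ i x) 2 μ :=
    memLp_finsetSum _ fun i _ => (hφ i).const_mul (c i)
  have hsq : ∫ x, (∑ i, c i * φ i x) ^ 2 ∂μ = 0 := by
    rw [← dotProduct_gram_mulVec hφ c, hGc, dotProduct_zero]
  have hS_zero : ∀ᵐ x ∂μ, ∑ i, c i * φ i x = 0 := by
    filter_upwards [(integral_eq_zero_iff_of_nonneg (fun x => sq_nonneg _)
      hS.integrable_sq).mp hsq] with x hx
    exact pow_eq_zero_iff two_ne_zero |>.mp hx
  have hS_ne : ∀ᵐ x ∂μ, ∑ i, c i * φ i x ≠ 0 := ae_iff.mpr (by simpa using hindep c hc)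
  obtain ⟨x, hx_zero, hx_ne⟩ := (hS_zero.and hS_ne).exists
  exact hx_ne hx_zero

end Gram

section MatrixInverse

variable {α n 𝕜 : Type*} [Fintype n] [DecidableEq n] [NormedField 𝕜] {l : Filter α}
  {B : α → Matrix n n 𝕜} {B₀ : Matrix n n 𝕜}

theorem Filter.Tendsto.eventually_isUnit_matrix (h : Tendsto B l (𝓝 B₀)) (hB₀ : B₀.det ≠ 0) :
    ∀ᶠ a in l, IsUnit (B a) := by
  filter_upwards [((continuous_id.matrix_det.tendsto B₀).comp h).eventually_ne hB₀] with a ha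
  exact (isUnit_iff_isUnit_det _).mpr (isUnit_iff_ne_zero.mpr ha)

theorem Filter.Tendsto.matrix_inv (h : Tendsto B l (𝓝 B₀)) (hB₀ : B₀.det ≠ 0) :
    Tendsto (fun a => (B a)⁻¹) l (𝓝 B₀⁻¹) := by
  refine (continuousAt_matrix_inv B₀ ?_).tendsto.comp h
  rw [show (Ring.inverse : 𝕜 → 𝕜) = Inv.inv from funext Ring.inverse_eq_inv]
  exact continuousAt_inv₀ hB₀

end MatrixInverse

theorem edmd_matrices_tendsto_ae_general {M Ω : Type*} [MeasurableSpace M]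
    [MeasurableSpace Ω] (P : Measure Ω)
    (μ : Measure M) [IsProbabilityMeasure μ] (F : M → M) (hF : Measurable F)
    (N : ℕ) (φ : Fin N → M → ℝ)
    (hφmeas : ∀ i, Measurable (φ i)) (hφL2 : ∀ i, MemLp (φ i) 2 μ)
    (hφFL2 : ∀ i, MemLp (φ i ∘ F) 2 μ)
    (hindep : ∀ c : Fin N → ℝ, c ≠ 0 → μ {x | ∑ i, c i * φ i x = 0} = 0)
    (χ : ℕ → Ω → M) (hχmeas : ∀ k, Measurable (χ k))
    (hiid : ProbabilityTheory.iIndepFun χ P)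
    (hlaw : ∀ k, P.map (χ k) = μ)
    (GK VK : Ω → ℕ → Matrix (Fin N) (Fin N) ℝ)
    (hGK : ∀ ω K, GK ω K =
      (K : ℝ)⁻¹ • ∑ i ∈ Finset.range K, Matrix.of fun j l => φ j (χ i ω) * φ l (χ i ω))
    (hVK : ∀ ω K, VK ω K =
      (K : ℝ)⁻¹ • ∑ i ∈ Finset.range K, Matrix.of fun j l => φ j (F (χ i ω)) * φ l (χ i ω))
    (G V : Matrix (Fin N) (Fin N) ℝ)
    (hG : G = Matrix.of fun j l => ∫ x, φ j x * φ l x ∂μ)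
    (hV : V = Matrix.of fun j l => ∫ x, φ j (F x) * φ l x ∂μ) :
    ∀ᵐ ω ∂P,
      (∀ᶠ K in atTop, IsUnit (GK ω K)) ∧
      Tendsto (fun K : ℕ => VK ω K * (GK ω K)⁻¹) atTop (𝓝 (V * G⁻¹)) := by
  have hG_det : G.det ≠ 0 := hG ▸ det_gram_ne_zero hφL2 hindep
  have hG_lim := tendsto_average_matrix_ae hχmeas hiid hlaw
    (fun j l => (hφmeas j).mul (hφmeas l)) fun j l => (hφL2 j).integrable_mul (hφL2 l)
  have hV_lim := tendsto_average_matrix_ae hχmeas hiid hlaw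
    (fun j l => ((hφmeas j).comp hF).mul (hφmeas l)) fun j l => (hφFL2 j).integrable_mul (hφL2 l)
  filter_upwards [hG_lim, hV_lim] with ω hGω hVω
  have hGK_lim : Tendsto (GK ω) atTop (𝓝 G) := by
    rw [funext (hGK ω), hG]
    exact hGω
  have hVK_lim : Tendsto (VK ω) atTop (𝓝 V) := by
    rw [funext (hVK ω), hV]
    exact hVω
  exact ⟨hGK_lim.eventually_isUnit_matrix hG_det, hVK_lim.mul (hGK_lim.matrix_inv hG_det)⟩

/-- **Almost sure convergence of EDMD as the number of samples K → ∞
(Theorem 2, matrix form).**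
Let `μ` be a probability measure, `F` measurable, and let the observables
`φ₁, …, φ_N` and `φ_i ∘ F` be square-integrable. Assume `μ`-independence of
the observables and let `χ₁, χ₂, …` be i.i.d. samples from `μ`. Then, almost
surely, the empirical Gram matrix `G_K = (1/K) ∑_{i<K} φ(χ i)φ(χ i)ᵀ` is
invertible for all sufficiently large `K`, and the EDMD matrices
`𝒜_{N,K} = V_K G_K⁻¹` (with `V_K = (1/K) ∑_{i<K} φ(F(χ i))φ(χ i)ᵀ`) converge
as `K → ∞` to `𝒜_N = V G⁻¹`, where `G = ∫ φφᵀ dμ` and `V = ∫ (φ∘F)φᵀ dμ`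
(convergence in the topology of `ℝ^{N×N}`, equivalently `‖𝒜_{N,K} − 𝒜_N‖ → 0`
in any matrix norm). -/
theorem edmd_matrices_tendsto_ae {M Ω : Type*} [MeasurableSpace M]
    [MeasurableSpace Ω] (P : Measure Ω) [IsProbabilityMeasure P]
    (μ : Measure M) [IsProbabilityMeasure μ] (F : M → M) (hF : Measurable F)
    (N : ℕ) (φ : Fin N → M → ℝ)
    (hφmeas : ∀ i, Measurable (φ i)) (hφL2 : ∀ i, MemLp (φ i) 2 μ)
    (hφFL2 : ∀ i, MemLp (φ i ∘ F) 2 μ)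
    (hindep : ∀ c : Fin N → ℝ, c ≠ 0 → μ {x | ∑ i, c i * φ i x = 0} = 0)
    (χ : ℕ → Ω → M) (hχmeas : ∀ k, Measurable (χ k))
    (hiid : ProbabilityTheory.iIndepFun χ P)
    (hlaw : ∀ k, P.map (χ k) = μ)
    (GK VK : Ω → ℕ → Matrix (Fin N) (Fin N) ℝ)
    (hGK : ∀ ω K, GK ω K =
      (K : ℝ)⁻¹ • ∑ i ∈ Finset.range K, Matrix.of fun j l => φ j (χ i ω) * φ l (χ i ω))
    (hVK : ∀ ω K, VK ω K =
      (K : ℝ)⁻¹ • ∑ i ∈ Finset.range K, Matrix.of fun j l => φ j (F (χ i ω)) * φ l (χ i ω))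
    (G V : Matrix (Fin N) (Fin N) ℝ)
    (hG : G = Matrix.of fun j l => ∫ x, φ j x * φ l x ∂μ)
    (hV : V = Matrix.of fun j l => ∫ x, φ j (F x) * φ l x ∂μ) :
    ∀ᵐ ω ∂P,
      (∀ᶠ K in atTop, IsUnit (GK ω K)) ∧
      Tendsto (fun K : ℕ => VK ω K * (GK ω K)⁻¹) atTop (𝓝 (V * G⁻¹)) :=
  edmd_matrices_tendsto_ae_general P μ F hF N φ hφmeas hφL2 hφFL2 hindep χ hχmeas hiid hlaw GK VK
    hGK hVK G V hG hV
end

section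
/- Under the same hypotheses (μ a probability measure on M, F measurable, φ_1,…,φ_N and φ_i∘F square-integrable with respect to μ, μ-independence of φ_1,…,φ_N, and (χ_k) i.i.d. with law μ), with probability one the Hausdorff distance between the spectrum (set of complex eigenvalues) of the EDMD matrix 𝒜_{N,K} = V_K G_K^{-1} and the spectrum of the limit matrix 𝒜_N = V G^{-1} converges to 0 as K → ∞; that is, almost surely dist_H(σ(𝒜_{N,K}), σ(𝒜_N)) → 0, where σ(·) ⊂ ℂ denotes the set of eigenvalues of a matrix viewed over ℂ and dist_H is the Hausdorff metric on compact subsets of ℂ. -/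
/-!
The strong law of large numbers gives `G_K → G` and `V_K → V` almost surely. The matrix `G` is
the Gram matrix of the `φ_i` in `L²(μ)`, and μ-independence says exactly that these are linearly
independent there, so `G` is invertible and `V_K G_K⁻¹ → V G⁻¹` almost surely.

It remains to see that the spectrum of a complex matrix depends continuously on the matrix for the
Hausdorff distance. Since `det (z - A) = ∏ (z - λ)` over the eigenvalues of `A` with
multiplicity, `|det (z - A)| < ε ^ N` forces `z` to lie within `ε` of an eigenvalue of `A`. Near
`B`, `det (z - A)` is uniformly close to `det (z - B)` for `z` in a disc that contains, by
Gershgorin, every eigenvalue of every matrix close to `B`; applying the estimate in both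
directions gives the two halves of the Hausdorff bound.
-/

open MeasureTheory Filter Topology Matrix ProbabilityTheory

namespace Matrix

variable {n : Type*} [Fintype n] [DecidableEq n]

theorem norm_le_sum_norm_of_mem_spectrum {K : Type*} [NormedField K] {A : Matrix n n K} {t : K}
    (ht : t ∈ spectrum K A) : ‖t‖ ≤ ∑ i, ∑ j, ‖A i j‖ := by
  rw [← spectrum_toLin', ← Module.End.hasEigenvalue_iff_mem_spectrum] at ht
  obtain ⟨k, hk⟩ := eigenvalue_mem_ball ht
  rw [mem_closedBall_iff_norm] at hk
  calc ‖t‖ ≤ ‖A k k‖ + ‖t - A k k‖ := norm_le_norm_add_norm_sub' t (A k k)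
    _ ≤ ∑ j, ‖A k j‖ := by
      rw [← Finset.add_sum_erase _ _ (Finset.mem_univ k)]
      gcongr
    _ ≤ ∑ i, ∑ j, ‖A i j‖ :=
      Finset.single_le_sum (f := fun i => ∑ j, ‖A i j‖)
        (fun i _ => Finset.sum_nonneg fun j _ => norm_nonneg _) (Finset.mem_univ k)

theorem exists_mem_spectrum_dist_lt_of_norm_eval_charpoly_lt (A : Matrix n n ℂ) {z : ℂ} {ε : ℝ}
    (hε : 0 ≤ ε) (h : ‖A.charpoly.eval z‖ < ε ^ Fintype.card n) :
    ∃ t ∈ spectrum ℂ A, dist z t < ε := by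
  by_contra! hfar
  refine h.not_ge ?_
  have hsplit := IsAlgClosed.splits A.charpoly
  rw [hsplit.eval_eq_prod_roots_of_monic A.charpoly_monic, ← normHom_apply,
    ← Multiset.prod_hom, Multiset.map_map]
  calc ε ^ Fintype.card n = (A.charpoly.roots.map fun _ => ε).prod := by
        rw [Multiset.map_const', Multiset.prod_replicate, ← A.charpoly_natDegree_eq_dim,
          ← hsplit.natDegree_eq_card_roots]
    _ ≤ _ := Multiset.prod_map_le_prod_map₀ _ _ (fun _ _ => hε) fun t ht => by
        simpa [dist_eq_norm] using
          hfar t (mem_spectrum_iff_isRoot_charpoly.2 (Polynomial.isRoot_of_mem_roots ht))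

theorem continuous_eval_charpoly :
    Continuous fun p : Matrix n n ℂ × ℂ => p.1.charpoly.eval p.2 := by
  simp_rw [eval_charpoly, scalar_apply]
  fun_prop

end Matrix

namespace Filter.Tendsto

variable {n ι : Type*} [Fintype n] [DecidableEq n] {l : Filter ι}
  {A : ι → Matrix n n ℂ} {B : Matrix n n ℂ}

theorem eventually_subset_thickening_spectrum (h : Tendsto A l (𝓝 B)) {ε : ℝ} (hε : 0 < ε) :
    ∀ᶠ i in l, spectrum ℂ B ⊆ Metric.thickening ε (spectrum ℂ (A i)) := by
  simp only [Set.subset_def, Metric.mem_thickening_iff]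
  refine B.finite_spectrum.eventually_all.2 fun s hs => ?_
  have hroot : B.charpoly.eval s = 0 := Matrix.mem_spectrum_iff_isRoot_charpoly.1 hs
  have hlim : Tendsto (fun i => (A i).charpoly.eval s) l (𝓝 0) :=
    hroot ▸ (Matrix.continuous_eval_charpoly.tendsto (B, s)).comp
      (h.prodMk_nhds tendsto_const_nhds)
  filter_upwards [(tendsto_norm_zero.comp hlim).eventually (gt_mem_nhds (pow_pos hε _))]
    with i hi
  exact (A i).exists_mem_spectrum_dist_lt_of_norm_eval_charpoly_lt hε.le hi

theorem eventually_spectrum_subset_thickening (h : Tendsto A l (𝓝 B)) {ε : ℝ} (hε : 0 < ε) :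
    ∀ᶠ i in l, spectrum ℂ (A i) ⊆ Metric.thickening ε (spectrum ℂ B) := by
  set R := ∑ i, ∑ j, ‖B i j‖ + 1
  have hbounded : ∀ᶠ i in l, ∑ j, ∑ k, ‖A i j k‖ ≤ R := by
    have hcont : Continuous fun M : Matrix n n ℂ => ∑ j, ∑ k, ‖M j k‖ := by fun_prop
    exact (hcont.tendsto B).comp h |>.eventually (ge_mem_nhds (lt_add_one _))
  obtain ⟨v, hv, hclose⟩ := (isCompact_closedBall (0 : ℂ) R).mem_uniformity_of_prod
    (f := fun (M : Matrix n n ℂ) z => M.charpoly.eval z)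
    Matrix.continuous_eval_charpoly.continuousOn (Set.mem_univ B)
    (Metric.dist_mem_uniformity (pow_pos hε (Fintype.card n)))
  rw [nhdsWithin_univ] at hv
  filter_upwards [h.eventually hv, hbounded] with i hAv hAR t ht
  have hnear : ‖B.charpoly.eval t‖ < ε ^ Fintype.card n := by
    have := hclose (A i) hAv t (mem_closedBall_zero_iff.2
      ((Matrix.norm_le_sum_norm_of_mem_spectrum ht).trans hAR))
    rwa [Matrix.mem_spectrum_iff_isRoot_charpoly.1 ht, Set.mem_ofPred_eq, dist_zero_left] at this
  exact Metric.mem_thickening_iff.2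
    (B.exists_mem_spectrum_dist_lt_of_norm_eval_charpoly_lt hε.le hnear)

theorem hausdorffDist_spectrum (h : Tendsto A l (𝓝 B)) :
    Tendsto (fun i => Metric.hausdorffDist (spectrum ℂ (A i)) (spectrum ℂ B)) l (𝓝 0) := by
  refine tendsto_order.2 ⟨fun c hc => Eventually.of_forall fun i =>
    hc.trans_le Metric.hausdorffDist_nonneg, fun ε hε => ?_⟩
  filter_upwards [h.eventually_spectrum_subset_thickening (half_pos hε),
    h.eventually_subset_thickening_spectrum (half_pos hε)] with i hA hB
  refine (Metric.hausdorffDist_le_of_mem_dist (half_pos hε).le (fun t ht => ?_)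
    fun s hs => ?_).trans_lt (half_lt_self hε)
  · obtain ⟨s, hs, hts⟩ := Metric.mem_thickening_iff.1 (hA ht)
    exact ⟨s, hs, hts.le⟩
  · obtain ⟨t, ht, hst⟩ := Metric.mem_thickening_iff.1 (hB hs)
    exact ⟨t, ht, hst.le⟩

end Filter.Tendsto

section SampleMean

variable {Ω M : Type*} [MeasurableSpace Ω] [MeasurableSpace M] {P : Measure Ω} {μ : Measure M}
  {χ : ℕ → Ω → M}

theorem ae_tendsto_sampleMean {E : Type*} [NormedAddCommGroup E] [NormedSpace ℝ E]
    [CompleteSpace E] [MeasurableSpace E] [BorelSpace E]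
    (hχ : ∀ k, Measurable (χ k)) (hiid : iIndepFun χ P) (hlaw : ∀ k, P.map (χ k) = μ)
    {f : M → E} (hf : Measurable f) (hint : Integrable f μ) :
    ∀ᵐ ω ∂P, Tendsto (fun K : ℕ => (K : ℝ)⁻¹ • ∑ i ∈ Finset.range K, f (χ i ω))
      atTop (𝓝 (∫ x, f x ∂μ)) := by
  have hident : ∀ i, IdentDistrib (f ∘ χ i) (f ∘ χ 0) P P := fun i =>
    (IdentDistrib.mk (hχ i).aemeasurable (hχ 0).aemeasurable (by rw [hlaw i, hlaw 0])).comp hf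
  have hint0 : Integrable (f ∘ χ 0) P :=
    (integrable_map_measure (hlaw 0 ▸ hint.aestronglyMeasurable) (hχ 0).aemeasurable).1
      (hlaw 0 ▸ hint)
  have hmean : ∫ ω, (f ∘ χ 0) ω ∂P = ∫ x, f x ∂μ := by
    rw [← hlaw 0, integral_map (hχ 0).aemeasurable (hlaw 0 ▸ hint.aestronglyMeasurable)]
    rfl
  rw [← hmean]
  exact strong_law_ae (fun i => f ∘ χ i) hint0 (fun i j hij => (hiid.indepFun hij).comp hf hf)
    hident

theorem ae_tendsto_empiricalMatrix {ι κ : Type*} [Fintype ι] [Fintype κ]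
    (hχ : ∀ k, Measurable (χ k)) (hiid : iIndepFun χ P) (hlaw : ∀ k, P.map (χ k) = μ)
    {f : ι → κ → M → ℝ} (hf : ∀ j l, Measurable (f j l)) (hint : ∀ j l, Integrable (f j l) μ) :
    ∀ᵐ ω ∂P, Tendsto
      (fun K : ℕ => (K : ℝ)⁻¹ • ∑ i ∈ Finset.range K, Matrix.of fun j l => f j l (χ i ω))
      atTop (𝓝 (Matrix.of fun j l => ∫ x, f j l x ∂μ)) := by
  have hint' : ∀ j, Integrable (fun x l => f j l x) μ := fun j => Integrable.of_eval (hint j)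
  have hmean : ∫ x, (fun j l => f j l x) ∂μ = fun j l => ∫ x, f j l x ∂μ := by
    ext j l
    rw [eval_integral hint', eval_integral (hint j)]
  have := ae_tendsto_sampleMean hχ hiid hlaw (f := fun x j l => f j l x)
    (measurable_pi_lambda _ fun j => measurable_pi_lambda _ fun l => hf j l)
    (Integrable.of_eval hint')
  rwa [hmean] at this

end SampleMean

section Gram

variable {M ι : Type*} [MeasurableSpace M] {μ : Measure M} {φ : ι → M → ℝ}

theorem gram_toLp (hφ : ∀ i, MemLp (φ i) 2 μ) :
    gram ℝ (fun i => (hφ i).toLp (φ i)) = Matrix.of fun j l => ∫ x, φ j x * φ l x ∂μ := by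
  ext j l
  rw [gram_apply, L2.inner_def, of_apply]
  refine integral_congr_ae ?_
  filter_upwards [(hφ j).coeFn_toLp, (hφ l).coeFn_toLp] with x hj hl
  rw [hj, hl, real_inner_eq_re_inner]
  simp [mul_comm]

theorem linearIndependent_toLp [Fintype ι] [NeZero μ] (hφ : ∀ i, MemLp (φ i) 2 μ)
    (hindep : ∀ c : ι → ℝ, c ≠ 0 → μ {x | ∑ i, c i * φ i x = 0} = 0) :
    LinearIndependent ℝ (fun i => (hφ i).toLp (φ i)) := by
  rw [Fintype.linearIndependent_iff]
  intro c hc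
  suffices c = 0 from congrFun this
  by_contra hc0
  have hcoe : ∀ᵐ x ∂μ, ∀ i, (c i • (hφ i).toLp (φ i)) x = c i * φ i x :=
    ae_all_iff.2 fun i => by
      filter_upwards [Lp.coeFn_smul (c i) ((hφ i).toLp (φ i)), (hφ i).coeFn_toLp] with x h1 h2
      rw [h1, Pi.smul_apply, h2, smul_eq_mul]
  have hzero : ∀ᵐ x ∂μ, ∑ i, c i * φ i x = 0 := by
    filter_upwards [Lp.coeFn_fun_finsetSum Finset.univ fun i => c i • (hφ i).toLp (φ i),
      Lp.coeFn_zero (E := ℝ) (p := 2) (μ := μ), hcoe] with x hsum h0 hx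
    rw [← Finset.sum_congr rfl fun i _ => hx i, ← hsum, hc, h0, Pi.zero_apply]
  have hnonzero : ∀ᵐ x ∂μ, ∑ i, c i * φ i x ≠ 0 :=
    ae_iff.2 (by simpa using hindep c hc0)
  obtain ⟨x, hx0, hx1⟩ := (hzero.and hnonzero).exists
  exact hx1 hx0

end Gram

theorem edmd_spectra_tendsto_ae_general {M Ω : Type*} [MeasurableSpace M]
    [MeasurableSpace Ω] (P : Measure Ω)
    (μ : Measure M) [IsProbabilityMeasure μ] (F : M → M) (hF : Measurable F)
    (N : ℕ) (φ : Fin N → M → ℝ)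
    (hφmeas : ∀ i, Measurable (φ i)) (hφL2 : ∀ i, MemLp (φ i) 2 μ)
    (hφFL2 : ∀ i, MemLp (φ i ∘ F) 2 μ)
    (hindep : ∀ c : Fin N → ℝ, c ≠ 0 → μ {x | ∑ i, c i * φ i x = 0} = 0)
    (χ : ℕ → Ω → M) (hχmeas : ∀ k, Measurable (χ k))
    (hiid : ProbabilityTheory.iIndepFun χ P)
    (hlaw : ∀ k, P.map (χ k) = μ)
    (GK VK : Ω → ℕ → Matrix (Fin N) (Fin N) ℝ)
    (hGK : ∀ ω K, GK ω K =
      (K : ℝ)⁻¹ • ∑ i ∈ Finset.range K, Matrix.of fun j l => φ j (χ i ω) * φ l (χ i ω))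
    (hVK : ∀ ω K, VK ω K =
      (K : ℝ)⁻¹ • ∑ i ∈ Finset.range K, Matrix.of fun j l => φ j (F (χ i ω)) * φ l (χ i ω))
    (G V : Matrix (Fin N) (Fin N) ℝ)
    (hG : G = Matrix.of fun j l => ∫ x, φ j x * φ l x ∂μ)
    (hV : V = Matrix.of fun j l => ∫ x, φ j (F x) * φ l x ∂μ) :
    ∀ᵐ ω ∂P,
      Tendsto (fun K : ℕ =>
          Metric.hausdorffDist
            (spectrum ℂ ((VK ω K * (GK ω K)⁻¹).map (Complex.ofReal : ℝ → ℂ)))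
            (spectrum ℂ ((V * G⁻¹).map (Complex.ofReal : ℝ → ℂ))))
        atTop (𝓝 0) := by
  have hGdet : G.det ≠ 0 := by
    rw [hG, ← gram_toLp hφL2]
    exact det_gram_ne_zero_iff_linearIndependent.2 (linearIndependent_toLp hφL2 hindep)
  have hGlim := ae_tendsto_empiricalMatrix hχmeas hiid hlaw
    (f := fun j l x => φ j x * φ l x) (fun j l => (hφmeas j).mul (hφmeas l))
    fun j l => (hφL2 j).integrable_mul (hφL2 l)
  have hVlim := ae_tendsto_empiricalMatrix hχmeas hiid hlaw
    (f := fun j l x => φ j (F x) * φ l x) (fun j l => ((hφmeas j).comp hF).mul (hφmeas l))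
    fun j l => (hφFL2 j).integrable_mul (hφL2 l)
  filter_upwards [hGlim, hVlim] with ω hGω hVω
  rw [← funext (hGK ω), ← hG] at hGω
  rw [← funext (hVK ω), ← hV] at hVω
  have hinv : ContinuousAt Inv.inv G :=
    continuousAt_matrix_inv G (by rw [Ring.inverse_eq_inv']; exact continuousAt_inv₀ hGdet)
  have hEDMD : Tendsto (fun K => VK ω K * (GK ω K)⁻¹) atTop (𝓝 (V * G⁻¹)) :=
    hVω.mul (hinv.tendsto.comp hGω)
  exact ((continuous_id.matrix_map Complex.continuous_ofReal).tendsto _ |>.comp hEDMD)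
    |>.hausdorffDist_spectrum

/-- **Almost sure spectral convergence of EDMD as K → ∞ (Theorem 2, spectra).**
Under the same hypotheses as the matrix-convergence statement (`μ` a
probability measure, `F` measurable, `φ_i` and `φ_i ∘ F` square-integrable,
`μ`-independence, i.i.d. samples `χ_k ∼ μ`), almost surely the Hausdorff
distance between the spectrum (set of complex eigenvalues) of the EDMD matrix
`𝒜_{N,K} = V_K G_K⁻¹` and the spectrum of the limit matrix `𝒜_N = V G⁻¹`
tends to `0` as `K → ∞`. -/
theorem edmd_spectra_tendsto_ae {M Ω : Type*} [MeasurableSpace M]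
    [MeasurableSpace Ω] (P : Measure Ω) [IsProbabilityMeasure P]
    (μ : Measure M) [IsProbabilityMeasure μ] (F : M → M) (hF : Measurable F)
    (N : ℕ) (φ : Fin N → M → ℝ)
    (hφmeas : ∀ i, Measurable (φ i)) (hφL2 : ∀ i, MemLp (φ i) 2 μ)
    (hφFL2 : ∀ i, MemLp (φ i ∘ F) 2 μ)
    (hindep : ∀ c : Fin N → ℝ, c ≠ 0 → μ {x | ∑ i, c i * φ i x = 0} = 0)
    (χ : ℕ → Ω → M) (hχmeas : ∀ k, Measurable (χ k))
    (hiid : ProbabilityTheory.iIndepFun χ P)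
    (hlaw : ∀ k, P.map (χ k) = μ)
    (GK VK : Ω → ℕ → Matrix (Fin N) (Fin N) ℝ)
    (hGK : ∀ ω K, GK ω K =
      (K : ℝ)⁻¹ • ∑ i ∈ Finset.range K, Matrix.of fun j l => φ j (χ i ω) * φ l (χ i ω))
    (hVK : ∀ ω K, VK ω K =
      (K : ℝ)⁻¹ • ∑ i ∈ Finset.range K, Matrix.of fun j l => φ j (F (χ i ω)) * φ l (χ i ω))
    (G V : Matrix (Fin N) (Fin N) ℝ)
    (hG : G = Matrix.of fun j l => ∫ x, φ j x * φ l x ∂μ)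
    (hV : V = Matrix.of fun j l => ∫ x, φ j (F x) * φ l x ∂μ) :
    ∀ᵐ ω ∂P,
      Tendsto (fun K : ℕ =>
          Metric.hausdorffDist
            (spectrum ℂ ((VK ω K * (GK ω K)⁻¹).map (Complex.ofReal : ℝ → ℂ)))
            (spectrum ℂ ((V * G⁻¹).map (Complex.ofReal : ℝ → ℂ))))
        atTop (𝓝 0) :=
  edmd_spectra_tendsto_ae_general P μ F hF N φ hφmeas hφL2 hφFL2 hindep χ hχmeas hiid hlaw GK VK hGK
    hVK G V hG hV
end

section
/- Let H be a separable Hilbert space, (e_i)_{i∈ℕ} an orthonormal basis of H, K : H → H a continuous linear operator, and P_N the orthogonal projection onto span{e_1,…,e_N}. Let g ∈ H belong to span{e_1,…,e_{N₀}} for some N₀ ∈ ℕ and let N_p ∈ ℕ be a finite prediction horizon. Then the finite-horizon predictions converge: lim_{N→∞} max_{0 ≤ i ≤ N_p} ‖(P_N K P_N)^i g − K^i g‖ = 0, where (P_N K P_N)^i and K^i denote the i-fold compositions (with the 0-th power being the identity). -/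
open Filter Topology

/-- The orthogonal projection of `H` onto the (finite-dimensional, hence
closed) subspace `span {e 0, …, e (N-1)}`, viewed as a continuous linear map
`H →L[𝕜] H`. -/
noncomputable def projSpanFirst (𝕜 : Type*) [RCLike 𝕜] {H : Type*}
    [NormedAddCommGroup H] [InnerProductSpace 𝕜 H] (e : ℕ → H) (N : ℕ) :
    H →L[𝕜] H :=
  haveI : FiniteDimensional 𝕜 (Submodule.span 𝕜 (e '' Set.Iio N)) :=
    FiniteDimensional.span_of_finite 𝕜 ((Set.finite_Iio N).image e)
  (Submodule.span 𝕜 (e '' Set.Iio N)).subtypeL.comp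
    ((Submodule.span 𝕜 (e '' Set.Iio N)).orthogonalProjectionOnto)

/-! The projections `P_N` onto the first `N` basis vectors are contractions converging strongly
to the identity, hence `P_N (u N) → x` whenever `u N → x`. Composing with the continuous `K`,
the compressions `P_N K P_N` inherit this continuous convergence towards `K`, and so do their
powers by induction; the maximum over the finitely many horizons `i ≤ N_p` then tends to `0`. -/

section

variable {ι 𝕜 E : Type*} [RCLike 𝕜] [NormedAddCommGroup E] [InnerProductSpace 𝕜 E]

theorem Submodule.tendsto_starProjection_apply_of_tendsto {l : Filter ι}
    {U : ι → Submodule 𝕜 E} [∀ i, (U i).HasOrthogonalProjection]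
    {x : E} (hUx : Tendsto (fun i => (U i).starProjection x) l (𝓝 x))
    {u : ι → E} (hu : Tendsto u l (𝓝 x)) :
    Tendsto (fun i => (U i).starProjection (u i)) l (𝓝 x) := by
  have hux : Tendsto (fun i => ‖u i - x‖) l (𝓝 0) := tendsto_iff_norm_sub_tendsto_zero.mp hu
  refine tendsto_iff_norm_sub_tendsto_zero.mpr <|
    squeeze_zero (fun _ => norm_nonneg _) (fun i => ?_)
      (by simpa using hux.add (tendsto_iff_norm_sub_tendsto_zero.mp hUx))
  calc ‖(U i).starProjection (u i) - x‖
      ≤ ‖(U i).starProjection (u i - x)‖ + ‖(U i).starProjection x - x‖ := by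
        rw [map_sub]; exact norm_sub_le_norm_sub_add_norm_sub _ _ _
    _ ≤ ‖u i - x‖ + ‖(U i).starProjection x - x‖ := by
        gcongr; exact (U i).norm_starProjection_apply_le _

end

theorem ContinuousLinearMap.tendsto_pow_apply_of_tendsto_apply {ι R M : Type*} [Semiring R]
    [TopologicalSpace M] [AddCommMonoid M] [Module R M] {l : Filter ι}
    {A : ι → M →L[R] M} {T : M →L[R] M}
    (hA : ∀ ⦃u : ι → M⦄ ⦃x : M⦄, Tendsto u l (𝓝 x) → Tendsto (fun i => A i (u i)) l (𝓝 (T x)))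
    (n : ℕ) {u : ι → M} {x : M} (hu : Tendsto u l (𝓝 x)) :
    Tendsto (fun i => (A i ^ n) (u i)) l (𝓝 ((T ^ n) x)) := by
  induction n with
  | zero => simpa using hu
  | succ n ih => simpa only [pow_succ', mul_apply_eq_comp] using hA ih

section

variable {𝕜 H : Type*} [RCLike 𝕜] [NormedAddCommGroup H] [InnerProductSpace 𝕜 H]

theorem HilbertBasis.tendsto_projSpanFirst_apply (e : HilbertBasis ℕ 𝕜 H) {u : ℕ → H} {x : H}
    (hu : Tendsto u atTop (𝓝 x)) :
    Tendsto (fun N => projSpanFirst 𝕜 (fun i => e i) N (u N)) atTop (𝓝 x) := by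
  set U : ℕ → Submodule 𝕜 H := fun N => Submodule.span 𝕜 ((fun i => (e i : H)) '' Set.Iio N)
  have (N : ℕ) : FiniteDimensional 𝕜 (U N) :=
    FiniteDimensional.span_of_finite 𝕜 ((Set.finite_Iio N).image _)
  have hmono : Monotone U := fun M N hMN =>
    Submodule.span_mono (Set.image_mono (Set.Iio_subset_Iio hMN))
  have hdense : ⊤ ≤ (⨆ N, U N).topologicalClosure := by
    rw [Submodule.iSup_span, ← Set.image_iUnion, Set.iUnion_Iio, Set.image_univ, e.dense_span]
  -- `projSpanFirst 𝕜 (fun i => e i) N` is `(U N).starProjection` by definition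
  exact Submodule.tendsto_starProjection_apply_of_tendsto
    (Submodule.starProjection_tendsto_self U hmono x hdense) hu

end

theorem finite_horizon_predictions_converge_general {𝕜 H : Type*} [RCLike 𝕜]
    [NormedAddCommGroup H] [InnerProductSpace 𝕜 H]
    (e : HilbertBasis ℕ 𝕜 H) (K : H →L[𝕜] H) (Np : ℕ) (g : H) :
    Tendsto (fun N : ℕ =>
        (Finset.range (Np + 1)).sup' Finset.nonempty_range_add_one fun i =>
          ‖(((projSpanFirst 𝕜 (fun i => e i) N).comp
              (K.comp (projSpanFirst 𝕜 (fun i => e i) N))) ^ i) g - (K ^ i) g‖)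
      atTop (𝓝 0) := by
  have hcompression : ∀ ⦃u : ℕ → H⦄ ⦃x : H⦄, Tendsto u atTop (𝓝 x) →
      Tendsto (fun N => (projSpanFirst 𝕜 (fun i => e i) N).comp
        (K.comp (projSpanFirst 𝕜 (fun i => e i) N)) (u N)) atTop (𝓝 (K x)) := fun _ x hu =>
    e.tendsto_projSpanFirst_apply <|
      (K.continuous.tendsto x).comp (e.tendsto_projSpanFirst_apply hu)
  have hpow (i : ℕ) := ContinuousLinearMap.tendsto_pow_apply_of_tendsto_apply hcompression i
    (tendsto_const_nhds (x := g))
  simpa using Tendsto.finset_sup'_nhds_apply Finset.nonempty_range_add_one fun i _ =>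
    tendsto_iff_norm_sub_tendsto_zero.mp (hpow i)

/-- **Convergence of finite-horizon predictions (Corollary 1, abstract form).**
Let `H` be a Hilbert space with orthonormal basis `(e_i)_{i∈ℕ}`, `K : H → H`
a continuous linear operator and `P_N` the orthogonal projection onto
`span {e_0, …, e_{N-1}}`. If `g ∈ span {e_0, …, e_{N₀-1}}` for some `N₀` and
`N_p` is a finite prediction horizon, then
`max_{0 ≤ i ≤ N_p} ‖(P_N K P_N)^i g − K^i g‖ → 0` as `N → ∞`. -/
theorem finite_horizon_predictions_converge {𝕜 H : Type*} [RCLike 𝕜]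
    [NormedAddCommGroup H] [InnerProductSpace 𝕜 H] [CompleteSpace H]
    (e : HilbertBasis ℕ 𝕜 H) (K : H →L[𝕜] H) (N₀ Np : ℕ) (g : H)
    (hg : g ∈ Submodule.span 𝕜 ((fun i => (e i : H)) '' Set.Iio N₀)) :
    Tendsto (fun N : ℕ =>
        (Finset.range (Np + 1)).sup' Finset.nonempty_range_add_one fun i =>
          ‖(((projSpanFirst 𝕜 (fun i => e i) N).comp
              (K.comp (projSpanFirst 𝕜 (fun i => e i) N))) ^ i) g - (K ^ i) g‖)
      atTop (𝓝 0) :=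
  finite_horizon_predictions_converge_general e K Np g
end
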